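/- For a random permutation of {1,…,n} chosen uniformly, the probability that the number of cycles exceeds 1.1·ln n tends to 0 as n → ∞. -/

import Mathlib

/-!
Chernoff bound for the number of cycles `c(σ)`. Inserting a new point into a permutation of
`n` points either makes it a fixed point or puts it right after one of the `n` old points in
its cycle, so `∑ σ, x ^ c(σ) = x (x + 1) ⋯ (x + n - 1)`. Taking `x = a > 1` in Markov's
inequality, `P(c > a log n) ≤ a ^ (-a log n) ∏ (1 + (a - 1) / (i + 1))
  ≤ exp ((a - 1) (1 + log n) - a log a log n)`, which tends to `0` because `a log a > a - 1`.
-/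

open Finset Real Filter Topology

namespace Equiv.Perm

variable {α β : Type*} [DecidableEq α] [Fintype α] [DecidableEq β] [Fintype β]

/-- Unlike `cycleType`, `partition` also counts the fixed points, as parts equal to `1`. -/
def numCycles (σ : Perm α) : ℕ :=
  Multiset.card σ.partition.parts

theorem numCycles_eq (σ : Perm α) :
    σ.numCycles = Multiset.card σ.cycleType + (Fintype.card α - #σ.support) := by
  simp [numCycles, parts_partition]

theorem card_cycleType_add_card_fixed_eq_numCycles (σ : Perm α) :
    Multiset.card σ.cycleType + Fintype.card {x // σ x = x} = σ.numCycles := by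
  rw [numCycles_eq, Fintype.card_subtype, ← card_compl]
  congr 3
  ext x
  simp

@[simp]
theorem numCycles_one : (1 : Perm α).numCycles = Fintype.card α := by
  simp [numCycles_eq]

theorem IsCycle.numCycles {σ : Perm α} (hσ : σ.IsCycle) :
    σ.numCycles = 1 + (Fintype.card α - #σ.support) := by
  rw [numCycles_eq, card_cycleType_eq_one.mpr hσ]

theorem Disjoint.numCycles_mul {σ τ : Perm α} (h : Disjoint σ τ) :
    (σ * τ).numCycles + Fintype.card α = σ.numCycles + τ.numCycles := by
  have hle : #(σ * τ).support ≤ Fintype.card α := card_le_univ _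
  rw [h.card_support_mul] at hle
  simp only [numCycles_eq, h.cycleType_mul, Multiset.card_add, h.card_support_mul]
  omega

theorem numCycles_extendDomain {p : β → Prop} [DecidablePred p] (f : α ≃ Subtype p)
    (σ : Perm α) :
    (σ.extendDomain f).numCycles = σ.numCycles + (Fintype.card β - Fintype.card α) := by
  have hα : Fintype.card α ≤ Fintype.card β :=
    (Fintype.card_congr f).trans_le (Fintype.card_subtype_le p)
  have hσ : #σ.support ≤ Fintype.card α := card_le_univ _
  rw [numCycles_eq, numCycles_eq, cycleType_extendDomain, card_support_extend_domain]
  omega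

theorem numCycles_permCongr (e : α ≃ β) (σ : Perm α) :
    (e.permCongr σ).numCycles = σ.numCycles := by
  have : e.permCongr σ =
      σ.extendDomain (e.trans (Equiv.subtypeUnivEquiv fun _ => trivial).symm) := by
    ext b
    rw [extendDomain_apply_subtype _ _ trivial]
    simp
  rw [this, numCycles_extendDomain, Fintype.card_congr e, Nat.sub_self, add_zero]

theorem numCycles_optionCongr (σ : Perm α) : numCycles σ.optionCongr = σ.numCycles + 1 := by
  have : σ.optionCongr = σ.extendDomain (Equiv.optionIsSomeEquiv α).symm := by
    ext (_ | a)
    · rw [extendDomain_apply_not_subtype] <;> simp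
    · rw [extendDomain_apply_subtype _ _ (by simp)]
      simp
  rw [this, numCycles_extendDomain, Fintype.card_option, Nat.add_sub_cancel_left]

theorem IsCycle.numCycles_swap_mul {c : Perm α} (hc : c.IsCycle) {x : α} (hx : c x ≠ x) :
    (swap x (c x) * c).numCycles = c.numCycles + 1 := by
  have hxs : x ∈ c.support := mem_support.mpr hx
  have hcard : #c.support ≤ Fintype.card α := card_le_univ _
  by_cases h2 : c (c x) = x
  · have h2s : #c.support = 2 := by
      rw [hc.eq_swap_of_apply_apply_eq_self hx h2, card_support_swap hx.symm]
    have hsq : swap x (c x) * c = 1 := by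
      nth_rw 2 [hc.eq_swap_of_apply_apply_eq_self hx h2]
      exact swap_mul_self _ _
    rw [hsq, numCycles_one, hc.numCycles]
    omega
  · have hs : #(swap x (c x) * c).support + 1 = #c.support := by
      rw [support_swap_mul_eq c x h2, sdiff_singleton_eq_erase, card_erase_add_one hxs]
    rw [IsCycle.numCycles (hc.swap_mul hx h2), hc.numCycles]
    omega

theorem numCycles_swap_mul {σ : Perm α} {x : α} (hx : σ x ≠ x) :
    (swap x (σ x) * σ).numCycles = σ.numCycles + 1 := by
  set c := σ.cycleOf x
  set τ := σ * c⁻¹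
  have hc : c.IsCycle := isCycle_cycleOf σ hx
  have hcx : c x = σ x := cycleOf_apply_self σ x
  have hτc : Disjoint τ c :=
    disjoint_mul_inv_of_mem_cycleFactorsFinset
      (cycleOf_mem_cycleFactorsFinset_iff.mpr (mem_support.mpr hx))
  have hσ : σ = τ * c := by simp [τ]
  clear_value τ c
  have hτx : τ x = x := (hτc x).resolve_right (hcx ▸ hx)
  have hτcx : τ (c x) = c x := (hτc (c x)).resolve_right fun h => (hcx ▸ hx) (c.injective h)
  have hsplit : swap x (σ x) * σ = τ * (swap x (c x) * c) := by
    rw [← hcx, hσ, ← mul_assoc, ← mul_assoc, mul_swap_eq_swap_mul, hτx, hτcx]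
  have hdisj : Disjoint τ (swap x (c x) * c) :=
    hτc.mono le_rfl fun y hy => (mem_support_swap_mul_imp_mem_support_ne hy).1
  have h1 := hτc.numCycles_mul
  have h2 := hdisj.numCycles_mul
  rw [← hσ, ← hsplit] at *
  rw [hc.numCycles_swap_mul (hcx ▸ hx)] at h2
  omega

theorem numCycles_decomposeOption_symm_none (σ : Perm α) :
    (decomposeOption.symm (none, σ)).numCycles = σ.numCycles + 1 := by
  simp [← one_def, numCycles_optionCongr]

theorem numCycles_decomposeOption_symm_some (a : α) (σ : Perm α) :
    (decomposeOption.symm (some a, σ)).numCycles = σ.numCycles := by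
  -- `τ` is `σ` with `none` inserted before `some a`; splitting `none` off again gives
  -- `σ.optionCongr`.
  set τ := decomposeOption.symm (some a, σ)
  have hτ : τ none = some a := by simp [τ]
  have hsplit : swap none (τ none) * τ = σ.optionCongr := by
    simp [τ, ← mul_assoc]
  have := numCycles_swap_mul (σ := τ) (x := none) (by simp [hτ])
  rw [hsplit, numCycles_optionCongr] at this
  omega

theorem sum_pow_numCycles_option {R : Type*} [CommSemiring R] (x : R) :
    ∑ σ : Perm (Option α), x ^ σ.numCycles =
      (x + Fintype.card α) * ∑ σ : Perm α, x ^ σ.numCycles := by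
  rw [← decomposeOption.symm.sum_comp, Fintype.sum_prod_type, Fintype.sum_option]
  simp only [numCycles_decomposeOption_symm_none, numCycles_decomposeOption_symm_some, sum_const,
    card_univ, nsmul_eq_mul, pow_succ, ← sum_mul]
  ring

theorem sum_pow_numCycles_congr {R : Type*} [CommSemiring R] (x : R) (e : α ≃ β) :
    ∑ σ : Perm α, x ^ σ.numCycles = ∑ σ : Perm β, x ^ σ.numCycles :=
  Fintype.sum_equiv (permCongr e) _ _ fun σ => by rw [numCycles_permCongr]

theorem sum_pow_numCycles {R : Type*} [CommSemiring R] (x : R) :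
    ∑ σ : Perm α, x ^ σ.numCycles = ∏ i ∈ range (Fintype.card α), (x + i) := by
  rw [sum_pow_numCycles_congr x (Fintype.equivFin α)]
  induction Fintype.card α with
  | zero => simp
  | succ n ih =>
    rw [sum_pow_numCycles_congr x (finSuccEquiv n), sum_pow_numCycles_option, ih, prod_range_succ,
      Fintype.card_fin, mul_comm]

end Equiv.Perm

theorem prod_range_add_le_factorial_mul_exp {a : ℝ} (ha : 1 ≤ a) (n : ℕ) :
    ∏ i ∈ range n, (a + i) ≤ n.factorial * exp ((a - 1) * (1 + log n)) := by
  have hterm (i : ℕ) : a + i ≤ (i + 1) * exp ((a - 1) / (i + 1)) := by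
    have := add_one_le_exp ((a - 1) / (i + 1))
    calc a + i = (i + 1) * ((a - 1) / (i + 1) + 1) := by field_simp; ring
      _ ≤ _ := by gcongr
  calc ∏ i ∈ range n, (a + i) ≤ ∏ i ∈ range n, ((i + 1) * exp ((a - 1) / (i + 1))) :=
        prod_le_prod (fun i _ => by linarith [(i.cast_nonneg : (0 : ℝ) ≤ i)]) fun i _ => hterm i
    _ = n.factorial * exp ((a - 1) * harmonic n) := by
        rw [prod_mul_distrib, ← exp_sum, ← prod_range_add_one_eq_factorial, harmonic]
        push_cast
        simp only [mul_sum, div_eq_mul_inv]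
    _ ≤ n.factorial * exp ((a - 1) * (1 + log n)) := by
        gcongr
        exact harmonic_le_one_add_log n

theorem card_filter_lt_mul_rpow_le_sum_pow {ι : Type*} (s : Finset ι) (f : ι → ℕ) {a : ℝ}
    (ha : 1 ≤ a) (t : ℝ) : (#{i ∈ s | t < f i} : ℝ) * a ^ t ≤ ∑ i ∈ s, a ^ f i := by
  calc (#{i ∈ s | t < f i} : ℝ) * a ^ t = ∑ i ∈ s with t < f i, a ^ t := by
        rw [sum_const, nsmul_eq_mul]
    _ ≤ ∑ i ∈ s with t < f i, a ^ f i := sum_le_sum fun i hi => by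
        rw [← rpow_natCast]
        exact rpow_le_rpow_of_exponent_le ha (mem_filter.mp hi).2.le
    _ ≤ ∑ i ∈ s, a ^ f i := sum_le_sum_of_subset_of_nonneg (filter_subset _ _) fun _ _ _ => by
        positivity

namespace Equiv.Perm

variable {α : Type*} [DecidableEq α] [Fintype α]

theorem card_numCycles_gt_mul_rpow_le {a : ℝ} (ha : 1 ≤ a) (t : ℝ) :
    (#{σ : Perm α | t < σ.numCycles} : ℝ) * a ^ t ≤
      (Fintype.card α).factorial * exp ((a - 1) * (1 + log (Fintype.card α))) := by
  grw [card_filter_lt_mul_rpow_le_sum_pow univ numCycles ha t, sum_pow_numCycles]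
  exact prod_range_add_le_factorial_mul_exp ha _

theorem tendsto_card_numCycles_gt_mul_log_div_factorial {a : ℝ} (ha : 1 < a) :
    Tendsto (fun n : ℕ => (#{σ : Perm (Fin n) | a * log n < σ.numCycles} : ℝ) / n.factorial)
      atTop (𝓝 0) := by
  have ha₀ : 0 < a := by linarith
  have hslope : a - 1 - a * log a < 0 := by
    have h := log_lt_sub_one_of_pos (inv_pos.mpr ha₀) (inv_ne_one.mpr ha.ne')
    rw [log_inv] at h
    have h' := mul_lt_mul_of_pos_left h ha₀
    rw [mul_sub, mul_inv_cancel₀ ha₀.ne'] at h'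
    linarith
  have hbound (n : ℕ) : (#{σ : Perm (Fin n) | a * log n < σ.numCycles} : ℝ) / n.factorial ≤
      exp ((a - 1) + (a - 1 - a * log a) * log n) := by
    have h := card_numCycles_gt_mul_rpow_le (α := Fin n) ha.le (a * log n)
    rw [Fintype.card_fin, rpow_def_of_pos ha₀] at h
    rw [div_le_iff₀ (by positivity)]
    refine le_of_mul_le_mul_right (h.trans_eq ?_) (exp_pos (log a * (a * log n)))
    rw [mul_right_comm, ← exp_add]
    ring_nf
  have hlim : Tendsto (fun n : ℕ => exp ((a - 1) + (a - 1 - a * log a) * log n)) atTop (𝓝 0) :=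
    tendsto_exp_atBot.comp <| tendsto_atBot_add_const_left _ _ <|
      (tendsto_const_mul_atBot_of_neg hslope).mpr
        (tendsto_log_atTop.comp tendsto_natCast_atTop_atTop)
  exact squeeze_zero (fun n => by positivity) hbound hlim

end Equiv.Perm

/-- For a uniformly random permutation of `{1,…,n}`, the probability that the number of
cycles exceeds `1.1 · ln n` tends to 0 as `n → ∞`. -/
theorem stmt_18 :
    Filter.Tendsto (fun n : ℕ =>
      (Nat.card {s : Equiv.Perm (Fin n) //
          1.1 * Real.log n <
            ((s.cycleType.card + Fintype.card {x : Fin n // s x = x} : ℕ) : ℝ)} : ℝ)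
        / (n.factorial : ℝ))
      Filter.atTop (nhds 0) := by
  have hcard (n : ℕ) : Nat.card {s : Equiv.Perm (Fin n) //
      1.1 * Real.log n < ((s.cycleType.card + Fintype.card {x : Fin n // s x = x} : ℕ) : ℝ)} =
      #{σ : Equiv.Perm (Fin n) | 1.1 * Real.log n < σ.numCycles} := by
    rw [Nat.card_eq_fintype_card, Fintype.card_subtype]
    simp only [Equiv.Perm.card_cycleType_add_card_fixed_eq_numCycles]
  simpa only [hcard] using
    Equiv.Perm.tendsto_card_numCycles_gt_mul_log_div_factorial (a := 1.1) (by norm_num)
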